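/- Let a, b ≥ 2 be integers and let S be the multiset of the μ = (a-1)(b-1) rational numbers c_{i,j} = i/a + j/b for 1 ≤ i ≤ a-1, 1 ≤ j ≤ b-1. Then (1/μ) · Σ_{(i,j)} (c_{i,j} - 1)^2 = (c_max - c_min)/12, where c_max = (a-1)/a + (b-1)/b and c_min = 1/a + 1/b are the largest and smallest elements of S. -/
import Mathlib

lemma sum_Icc_id_q (m : ℕ) : ∑ j ∈ Finset.Icc 1 m, (j : ℚ) = m * (m + 1) / 2 := by
  induction m with
  | zero => simp
  | succ k ih =>
    rw [Finset.sum_Icc_succ_top (Nat.le_add_left 1 k), ih]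
    push_cast; ring

lemma sum_Icc_sq_q (m : ℕ) :
    ∑ j ∈ Finset.Icc 1 m, (j : ℚ) ^ 2 = m * (m + 1) * (2 * m + 1) / 6 := by
  induction m with
  | zero => simp
  | succ k ih =>
    rw [Finset.sum_Icc_succ_top (Nat.le_add_left 1 k), ih]
    push_cast; ring

lemma sum_Icc_quad (m : ℕ) (C D E : ℚ) :
    ∑ j ∈ Finset.Icc 1 m, (C + D * j + E * (j : ℚ) ^ 2)
      = m * C + D * (m * (m + 1) / 2) + E * (m * (m + 1) * (2 * m + 1) / 6) := by
  rw [Finset.sum_add_distrib, Finset.sum_add_distrib, Finset.sum_const, ← Finset.mul_sum,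
    ← Finset.mul_sum, sum_Icc_id_q, sum_Icc_sq_q, Nat.card_Icc]
  simp [nsmul_eq_mul]

/-- Hertling equality for Brieskorn plane curve singularities: with
`μ = (a-1)(b-1)` and spectral numbers `c_{i,j} = i/a + j/b`,
`(1/μ) Σ (c_{i,j} - 1)² = (c_max - c_min)/12`. -/
theorem hertling_equality_brieskorn (a b : ℕ) (ha : 2 ≤ a) (hb : 2 ≤ b) :
    (1 / (((a : ℚ) - 1) * ((b : ℚ) - 1))) *
      ∑ p ∈ (Finset.Icc 1 (a - 1)) ×ˢ (Finset.Icc 1 (b - 1)),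
        ((p.1 : ℚ) / a + (p.2 : ℚ) / b - 1) ^ 2 =
    ((((a : ℚ) - 1) / a + ((b : ℚ) - 1) / b) - ((1 : ℚ) / a + 1 / b)) / 12 := by
  have ha0 : (a : ℚ) ≠ 0 := by
    have : (0:ℚ) < a := by exact_mod_cast Nat.lt_of_lt_of_le (by norm_num) ha
    linarith
  have hb0 : (b : ℚ) ≠ 0 := by
    have : (0:ℚ) < b := by exact_mod_cast Nat.lt_of_lt_of_le (by norm_num) hb
    linarith
  have ha1 : (1:ℚ) < a := by exact_mod_cast Nat.lt_of_lt_of_le (by norm_num) ha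
  have hb1 : (1:ℚ) < b := by exact_mod_cast Nat.lt_of_lt_of_le (by norm_num) hb
  have ha1' : ((a:ℚ) - 1) ≠ 0 := by linarith
  have hb1' : ((b:ℚ) - 1) ≠ 0 := by linarith
  have hca : ((a - 1 : ℕ) : ℚ) = (a : ℚ) - 1 := by
    rw [Nat.cast_sub (le_trans (by norm_num) ha), Nat.cast_one]
  have hcb : ((b - 1 : ℕ) : ℚ) = (b : ℚ) - 1 := by
    rw [Nat.cast_sub (le_trans (by norm_num) hb), Nat.cast_one]
  rw [Finset.sum_product]
  have inner : ∀ i : ℕ,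
      ∑ j ∈ Finset.Icc 1 (b - 1), ((i : ℚ) / a + (j : ℚ) / b - 1) ^ 2
        = ((b:ℚ)-1) * ((i:ℚ)/a - 1)^2
          + (2 * ((i:ℚ)/a - 1) / b) * (((b:ℚ)-1) * ((b:ℚ)-1+1) / 2)
          + (1 / (b:ℚ)^2) * (((b:ℚ)-1) * ((b:ℚ)-1+1) * (2*((b:ℚ)-1)+1) / 6) := by
    intro i
    have := sum_Icc_quad (b - 1) (((i:ℚ)/a - 1)^2) (2 * ((i:ℚ)/a - 1) / b) (1 / (b:ℚ)^2)
    rw [hcb] at this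
    rw [← this]
    apply Finset.sum_congr rfl
    intro j _
    field_simp
    ring
  simp_rw [inner]
  have outer :
      ∑ i ∈ Finset.Icc 1 (a - 1),
        (((b:ℚ)-1) * ((i:ℚ)/a - 1)^2
          + (2 * ((i:ℚ)/a - 1) / b) * (((b:ℚ)-1) * ((b:ℚ)-1+1) / 2)
          + (1 / (b:ℚ)^2) * (((b:ℚ)-1) * ((b:ℚ)-1+1) * (2*((b:ℚ)-1)+1) / 6))
      = ((a:ℚ)-1) * (((b:ℚ)-1)
            + (2 * (-1) / b) * (((b:ℚ)-1) * ((b:ℚ)-1+1) / 2)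
            + (1 / (b:ℚ)^2) * (((b:ℚ)-1) * ((b:ℚ)-1+1) * (2*((b:ℚ)-1)+1) / 6))
        + (((b:ℚ)-1) * (-2/a) + (2/(a*b)) * (((b:ℚ)-1) * ((b:ℚ)-1+1) / 2))
            * (((a:ℚ)-1) * ((a:ℚ)-1+1) / 2)
        + (((b:ℚ)-1) / (a:ℚ)^2) * (((a:ℚ)-1) * ((a:ℚ)-1+1) * (2*((a:ℚ)-1)+1) / 6) := by
    have := sum_Icc_quad (a - 1)
      (((b:ℚ)-1) + (2 * (-1) / b) * (((b:ℚ)-1) * ((b:ℚ)-1+1) / 2)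
        + (1 / (b:ℚ)^2) * (((b:ℚ)-1) * ((b:ℚ)-1+1) * (2*((b:ℚ)-1)+1) / 6))
      (((b:ℚ)-1) * (-2/a) + (2/(a*b)) * (((b:ℚ)-1) * ((b:ℚ)-1+1) / 2))
      (((b:ℚ)-1) / (a:ℚ)^2)
    rw [hca] at this
    rw [← this]
    apply Finset.sum_congr rfl
    intro i _
    field_simp
    ring
  rw [outer]
  field_simp
  ring
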